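/- With v = v_P + v_D, the vector -v_D is the metric projection of -v onto the recession cone of cl(dom f): -v_D = P_{rec(cl dom f)}(-v). -/

import Mathlib

open scoped InnerProductSpace Pointwise Classical
open Filter Topology

noncomputable section

variable {H : Type*} [NormedAddCommGroup H] [InnerProductSpace ℝ H]

/-- The effective domain of an extended-real-valued function. -/
def fdom {α : Type*} (f : α → EReal) : Set α := {x | f x ≠ ⊤}

/-- The Fenchel conjugate `f*(u) = sup_x (⟪x, u⟫ - f x)`. -/
def fconj (f : H → EReal) : H → EReal :=
  fun u => ⨆ x : H, ((⟪x, u⟫_ℝ : ℝ) : EReal) - f x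

/-- The recession function `(rec f)(y) = sup_{x ∈ dom f} (f (x + y) - f x)`. -/
def recFn (f : H → EReal) : H → EReal :=
  fun y => ⨆ x ∈ fdom f, (f (x + y) - f x)

/-- A proper function: never `-∞` and not identically `+∞`. -/
def ProperFn {α : Type*} (f : α → EReal) : Prop := (∀ x, f x ≠ ⊥) ∧ ∃ x, f x ≠ ⊤

/-- Convexity of an extended-real-valued function, via convexity of its epigraph. -/
def ConvexFn (f : H → EReal) : Prop :=
  Convex ℝ {p : H × ℝ | f p.1 ≤ (p.2 : EReal)}

/-- `v` is the element of minimum norm of `S`, i.e. `v = P_S 0`, the metric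
projection of `0` onto `S`. -/
def IsMinNormPoint (S : Set H) (v : H) : Prop := v ∈ S ∧ ∀ w ∈ S, ‖v‖ ≤ ‖w‖

/-- `p` is the metric projection of `x` onto `S`, i.e. `p = P_S x`. -/
def IsProjOn (S : Set H) (x p : H) : Prop := p ∈ S ∧ ∀ w ∈ S, dist x p ≤ dist x w

/-- The polar cone `S° = {u | ∀ x ∈ S, ⟪x, u⟫ ≤ 0}`. -/
def polarCone (s : Set H) : Set H := {u | ∀ x ∈ s, ⟪x, u⟫_ℝ ≤ 0}

/-- The recession cone `rec S = {x | ∀ y ∈ S, x + y ∈ S}`. -/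
def recCone (s : Set H) : Set H := {x | ∀ y ∈ s, x + y ∈ s}

/-- `p = prox_f w`: `p` minimizes `y ↦ f y + ½‖y - w‖²`. -/
def IsProxOf (f : H → EReal) (w p : H) : Prop :=
  ∀ y : H, f p + ((1 / 2 * ‖p - w‖ ^ 2 : ℝ) : EReal) ≤ f y + ((1 / 2 * ‖y - w‖ ^ 2 : ℝ) : EReal)

/-!
Write `S_P = cl(dom f - dom g)`, `S_D = cl(dom f* + dom g*)` and `C = cl(dom f)`. Minimality of
`vP` in the convex set `S_P` gives `⟪vP, z⟫ ≥ 0` for every recession direction `z` of `S_P`, in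
particular for every `z ∈ rec C`; likewise for `vD` and `S_D`.

A vector `u` bounded above on `dom f` is a recession direction of `dom f*`, hence of `S_D`, so
`⟪vD, u⟫ ≥ 0`; since `rec C` is the polar of the barrier cone of `C`, this says `-vD ∈ rec C`.
Dually, a vector `u` bounded above on `S_D` is a recession direction of `dom g**`, whose closure is
`cl(dom g)`, so `-u ∈ rec S_P` and `⟪vP, u⟫ ≤ 0`: thus `vP ∈ rec S_D`. Testing `vP` against
`-vD ∈ rec C` and `vD` against `vP ∈ rec S_D` gives `⟪vP, vD⟫ = 0`, and then
`⟪-(vP + vD) - (-vD), w - (-vD)⟫ = -⟪vP, w⟫ ≤ 0` for all `w ∈ rec C`, the variational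
characterization of `P_{rec C}(-(vP + vD)) = -vD`.
-/

def barrierCone (s : Set H) : Set H := {u | ∃ M : ℝ, ∀ x ∈ s, ⟪x, u⟫_ℝ ≤ M}

lemma barrierCone_anti {s t : Set H} (h : s ⊆ t) : barrierCone t ⊆ barrierCone s :=
  fun _ ⟨M, hM⟩ => ⟨M, fun x hx => hM x (h hx)⟩

lemma barrierCone_add_subset_right {s t : Set H} (hs : s.Nonempty) :
    barrierCone (s + t) ⊆ barrierCone t := by
  rintro u ⟨M, hM⟩
  obtain ⟨a, ha⟩ := hs
  refine ⟨M - ⟪a, u⟫_ℝ, fun x hx => ?_⟩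
  have := hM (a + x) (Set.add_mem_add ha hx)
  rw [inner_add_left] at this
  linarith

lemma sub_mem_closure_sub {G : Type*} [TopologicalSpace G] [Sub G] [ContinuousSub G]
    {s t : Set G} {a b : G} (ha : a ∈ closure s) (hb : b ∈ closure t) : a - b ∈ closure (s - t) :=
  map_mem_closure₂ continuous_sub ha hb fun _ ha _ hb => Set.sub_mem_sub ha hb

section RecessionCone

variable {E : Type*} [NormedAddCommGroup E]

lemma zero_mem_recCone (s : Set E) : (0 : E) ∈ recCone s :=
  fun y hy => by rwa [zero_add]

lemma recCone_subset_recCone_closure (s : Set E) : recCone s ⊆ recCone (closure s) :=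
  fun z hz _ hy => map_mem_closure (continuous_const_add z) hy hz

lemma mem_recCone_closure_add {s t : Set E} {z : E} (hz : z ∈ recCone s) :
    z ∈ recCone (closure (s + t)) := by
  refine recCone_subset_recCone_closure _ ?_
  rintro _ ⟨a, ha, b, hb, rfl⟩
  rw [← add_assoc]
  exact Set.add_mem_add (hz a ha) hb

lemma sub_mem_recCone_closure_sub {s t : Set E} {z w : E} (hz : z ∈ recCone (closure s))
    (hw : w ∈ recCone (closure t)) : z - w ∈ recCone (closure (s - t)) := by
  intro y hy
  rw [← closure_closure (s := s - t)]
  refine map_mem_closure (continuous_const_add (z - w)) hy ?_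
  rintro _ ⟨a, ha, b, hb, rfl⟩
  rw [show z - w + (a - b) = (z + a) - (w + b) by abel]
  exact sub_mem_closure_sub (hz a (subset_closure ha)) (hw b (subset_closure hb))

end RecessionCone

lemma IsMinNormPoint.real_inner_sub_nonneg {S : Set H} {v w : H} (hS : Convex ℝ S)
    (hv : IsMinNormPoint S v) (hw : w ∈ S) : 0 ≤ ⟪v, w - v⟫_ℝ := by
  have : Nonempty S := ⟨⟨v, hv.1⟩⟩
  have hinf : ‖0 - v‖ = ⨅ w : S, ‖0 - (w : H)‖ :=
    le_antisymm (le_ciInf fun w => by simpa using hv.2 w w.2)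
      (ciInf_le (f := fun w : S => ‖0 - (w : H)‖)
        ⟨0, Set.forall_mem_range.2 fun _ => norm_nonneg _⟩ ⟨v, hv.1⟩)
  simpa [inner_neg_left] using (norm_eq_iInf_iff_real_inner_le_zero hS hv.1).1 hinf w hw

lemma IsMinNormPoint.real_inner_nonneg_of_mem_recCone {S : Set H} {v z : H} (hS : Convex ℝ S)
    (hv : IsMinNormPoint S v) (hz : z ∈ recCone S) : 0 ≤ ⟪v, z⟫_ℝ := by
  simpa using hv.real_inner_sub_nonneg hS (hz v hv.1)

lemma isProjOn_of_real_inner_le_zero {K : Set H} {x p : H} (hp : p ∈ K)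
    (h : ∀ w ∈ K, ⟪x - p, w - p⟫_ℝ ≤ 0) : IsProjOn K x p := by
  refine ⟨hp, fun w hw => ?_⟩
  rw [dist_eq_norm, dist_eq_norm, ← sq_le_sq₀ (norm_nonneg _) (norm_nonneg _),
    show x - w = (x - p) - (w - p) by abel, norm_sub_sq_real (x - p)]
  nlinarith [h w hw, sq_nonneg ‖w - p‖]

lemma exists_real_inner_lt_of_notMem [CompleteSpace H] {C : Set H} (hC : Convex ℝ C)
    (hC' : IsClosed C) {x : H} (hx : x ∉ C) :
    ∃ (u : H) (s : ℝ), (∀ c ∈ C, ⟪c, u⟫_ℝ < s) ∧ s < ⟪x, u⟫_ℝ := by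
  obtain ⟨φ, s, hφ, hs⟩ := geometric_hahn_banach_closed_point hC hC' hx
  have hu : ∀ y, ⟪y, (InnerProductSpace.toDual ℝ H).symm φ⟫_ℝ = φ y := fun y => by
    rw [real_inner_comm, InnerProductSpace.toDual_symm_apply]
  exact ⟨_, s, fun c hc => (hu c).symm ▸ hφ c hc, (hu x).symm ▸ hs⟩

lemma polarCone_barrierCone_subset_recCone [CompleteSpace H] {C : Set H} (hC : Convex ℝ C)
    (hC' : IsClosed C) : polarCone (barrierCone C) ⊆ recCone C := by
  intro z hz y hy
  by_contra hzy
  obtain ⟨u, s, hs, hsx⟩ := exists_real_inner_lt_of_notMem hC hC' hzy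
  have hzu : ⟪u, z⟫_ℝ ≤ 0 := hz u ⟨s, fun c hc => (hs c hc).le⟩
  rw [inner_add_left, real_inner_comm] at hsx
  linarith [hs y hy]

lemma EReal.eq_top_of_forall_coe_add_mul_le {F : EReal} {c d : ℝ} (hd : 0 < d)
    (h : ∀ t : ℝ, 0 ≤ t → ((c + t * d : ℝ) : EReal) ≤ F) : F = ⊤ := by
  refine (EReal.eq_top_iff_forall_lt F).2 fun y => ?_
  have hlim : Tendsto (fun t => c + t * d) atTop atTop :=
    tendsto_atTop_add_const_left _ c (tendsto_id.atTop_mul_const hd)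
  obtain ⟨t, ht, hyt⟩ := ((eventually_ge_atTop 0).and (hlim.eventually_gt_atTop y)).exists
  exact (EReal.coe_lt_coe_iff.2 hyt).trans_le (h t ht)

lemma EReal.coe_sub_le_comm {a : ℝ} {b c : EReal} (h : (a : EReal) - c ≤ b) :
    (a : EReal) - b ≤ c := by
  induction b using EReal.rec <;> induction c using EReal.rec <;> try simp at h ⊢
  · exact EReal.coe_ne_bot _ (by exact_mod_cast h)
  · norm_cast at h ⊢
    linarith

lemma convex_fdom {f : H → EReal} (hf : ConvexFn f) : Convex ℝ (fdom f) := by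
  have : fdom f = LinearMap.fst ℝ H ℝ '' {p : H × ℝ | f p.1 ≤ p.2} := by
    ext x
    refine ⟨fun hx => ⟨(x, (f x).toReal), EReal.le_coe_toReal hx, rfl⟩, ?_⟩
    rintro ⟨p, hp, rfl⟩
    exact ne_top_of_le_ne_top (EReal.coe_ne_top _) hp
  rw [this]
  exact hf.linear_image _

lemma le_fconj (f : H → EReal) (x u : H) : ((⟪x, u⟫_ℝ : ℝ) : EReal) - f x ≤ fconj f u :=
  le_iSup (fun x => ((⟪x, u⟫_ℝ : ℝ) : EReal) - f x) x

lemma convexFn_fconj (f : H → EReal) : ConvexFn (fconj f) := by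
  have : {p : H × ℝ | fconj f p.1 ≤ p.2} =
      ⋂ x, {p : H × ℝ | ((⟪x, p.1⟫_ℝ : ℝ) : EReal) - f x ≤ p.2} := by
    ext p
    simp [fconj]
  rw [ConvexFn, this]
  refine convex_iInter fun x => ?_
  induction f x using EReal.rec with
  | bot => simpa using convex_empty
  | top => simpa using convex_univ
  | coe r =>
    simp only [← EReal.coe_sub, EReal.coe_le_coe_iff]
    intro p hp q hq a b ha hb hab
    simp only [Set.mem_ofPred_eq, Prod.fst_add, Prod.snd_add, Prod.smul_fst, Prod.smul_snd,
      smul_eq_mul, inner_add_right, real_inner_smul_right] at hp hq ⊢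
    have hr : r = a * r + b * r := by rw [← add_mul, hab, one_mul]
    linarith [mul_le_mul_of_nonneg_left hp ha, mul_le_mul_of_nonneg_left hq hb]

lemma fconj_add_le {f : H → EReal} {u : H} {M : ℝ} (hM : ∀ x ∈ fdom f, ⟪x, u⟫_ℝ ≤ M) (w : H) :
    fconj f (w + u) ≤ fconj f w + M := by
  refine iSup_le fun x => ?_
  by_cases hx : f x = ⊤
  · simp [hx]
  calc ((⟪x, w + u⟫_ℝ : ℝ) : EReal) - f x
      = (((⟪x, w⟫_ℝ : ℝ) : EReal) - f x) + ((⟪x, u⟫_ℝ : ℝ) : EReal) := by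
        rw [inner_add_right, EReal.coe_add, sub_eq_add_neg, sub_eq_add_neg, add_right_comm]
    _ ≤ fconj f w + M := add_le_add (le_fconj f x w) (EReal.coe_le_coe_iff.2 (hM x hx))

lemma barrierCone_fdom_subset_recCone_fdom_fconj (f : H → EReal) :
    barrierCone (fdom f) ⊆ recCone (fdom (fconj f)) := by
  rintro u ⟨M, hM⟩ w hw
  rw [add_comm]
  exact ne_top_of_le_ne_top (EReal.add_lt_top hw (EReal.coe_ne_top M)).ne (fconj_add_le hM w)

lemma fdom_subset_fdom_fconj_fconj (f : H → EReal) : fdom f ⊆ fdom (fconj (fconj f)) :=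
  fun x hx => ne_top_of_le_ne_top hx <| iSup_le fun u =>
    EReal.coe_sub_le_comm (by rw [real_inner_comm]; exact le_fconj f x u)

lemma fdom_fconj_fconj_subset_closure [CompleteSpace H] {f : H → EReal} (hf : Convex ℝ (fdom f))
    (hne : (fdom (fconj f)).Nonempty) : fdom (fconj (fconj f)) ⊆ closure (fdom f) := by
  intro x hx
  by_contra hxC
  obtain ⟨u, s, hs, hsx⟩ := exists_real_inner_lt_of_notMem hf.closure isClosed_closure hxC
  obtain ⟨w, hw⟩ := hne
  set a := (fconj f w).toReal
  -- Along the ray `w + t • u` the conjugate grows at most like `t * s`,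
  -- while `⟪·, x⟫` grows like `t * ⟪u, x⟫`.
  have hray : ∀ t : ℝ, 0 ≤ t →
      (((⟪x, w⟫_ℝ - a) + t * (⟪x, u⟫_ℝ - s) : ℝ) : EReal) ≤ fconj (fconj f) x := by
    intro t ht
    have hbound : fconj f (w + t • u) ≤ ((a + t * s : ℝ) : EReal) := by
      refine (fconj_add_le (M := t * s) (fun y hy => ?_) w).trans ?_
      · rw [real_inner_smul_right]
        exact mul_le_mul_of_nonneg_left (hs y (subset_closure hy)).le ht
      · rw [EReal.coe_add]
        exact add_le_add_left (EReal.le_coe_toReal hw) _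
    calc (((⟪x, w⟫_ℝ - a) + t * (⟪x, u⟫_ℝ - s) : ℝ) : EReal)
        = ((⟪w + t • u, x⟫_ℝ : ℝ) : EReal) - ((a + t * s : ℝ) : EReal) := by
          rw [← EReal.coe_sub, inner_add_left, real_inner_smul_left, real_inner_comm w,
            real_inner_comm u]
          congr 1
          ring
      _ ≤ ((⟪w + t • u, x⟫_ℝ : ℝ) : EReal) - fconj f (w + t • u) := EReal.sub_le_sub le_rfl hbound
      _ ≤ fconj (fconj f) x := le_fconj (fconj f) _ x
  exact hx (EReal.eq_top_of_forall_coe_add_mul_le (sub_pos.2 hsx) hray)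

lemma closure_fdom_fconj_fconj [CompleteSpace H] {f : H → EReal} (hf : Convex ℝ (fdom f))
    (hne : (fdom (fconj f)).Nonempty) : closure (fdom (fconj (fconj f))) = closure (fdom f) :=
  (closure_minimal (fdom_fconj_fconj_subset_closure hf hne) isClosed_closure).antisymm
    (closure_mono (fdom_subset_fdom_fconj_fconj f))

section MinNormPoints

variable {f g : H → EReal} {v : H}

lemma convex_closure_fdom_sub (hf : ConvexFn f) (hg : ConvexFn g) :
    Convex ℝ (closure (fdom f - fdom g)) :=
  ((convex_fdom hf).sub (convex_fdom hg)).closure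

lemma convex_closure_fdom_fconj_add (f g : H → EReal) :
    Convex ℝ (closure (fdom (fconj f) + fdom (fconj g))) :=
  ((convex_fdom (convexFn_fconj f)).add (convex_fdom (convexFn_fconj g))).closure

lemma real_inner_nonneg_of_mem_recCone_closure_fdom (hf : ConvexFn f) (hg : ConvexFn g)
    (hv : IsMinNormPoint (closure (fdom f - fdom g)) v) {z : H}
    (hz : z ∈ recCone (closure (fdom f))) : 0 ≤ ⟪v, z⟫_ℝ :=
  hv.real_inner_nonneg_of_mem_recCone (convex_closure_fdom_sub hf hg)
    (by simpa using sub_mem_recCone_closure_sub hz (zero_mem_recCone _))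

variable [CompleteSpace H]

lemma neg_mem_recCone_closure_fdom (hf : ConvexFn f)
    (hv : IsMinNormPoint (closure (fdom (fconj f) + fdom (fconj g))) v) :
    -v ∈ recCone (closure (fdom f)) := by
  refine polarCone_barrierCone_subset_recCone (convex_fdom hf).closure isClosed_closure
    fun u hu => ?_
  have := hv.real_inner_nonneg_of_mem_recCone (convex_closure_fdom_fconj_add f g) <|
    mem_recCone_closure_add <|
      barrierCone_fdom_subset_recCone_fdom_fconj f (barrierCone_anti subset_closure hu)
  rw [inner_neg_right, real_inner_comm]
  linarith

lemma mem_recCone_closure_fdom_fconj_add (hf : ConvexFn f) (hg : ConvexFn g)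
    (hv : IsMinNormPoint (closure (fdom f - fdom g)) v)
    (hne : (closure (fdom (fconj f) + fdom (fconj g))).Nonempty) :
    v ∈ recCone (closure (fdom (fconj f) + fdom (fconj g))) := by
  obtain ⟨hf_ne, hg_ne⟩ := Set.add_nonempty.1 (closure_nonempty_iff.1 hne)
  refine polarCone_barrierCone_subset_recCone (convex_closure_fdom_fconj_add f g)
    isClosed_closure fun u hu => ?_
  have hu_rec : u ∈ recCone (closure (fdom g)) := by
    rw [← closure_fdom_fconj_fconj (convex_fdom hg) hg_ne]
    exact recCone_subset_recCone_closure _ <| barrierCone_fdom_subset_recCone_fdom_fconj _ <|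
      barrierCone_add_subset_right hf_ne (barrierCone_anti subset_closure hu)
  have := hv.real_inner_nonneg_of_mem_recCone (convex_closure_fdom_sub hf hg)
    (by simpa using sub_mem_recCone_closure_sub (zero_mem_recCone _) hu_rec)
  rw [inner_neg_right, real_inner_comm] at this
  linarith

end MinNormPoints

theorem neg_vD_eq_proj_recCone_general {H : Type*} [NormedAddCommGroup H] [InnerProductSpace ℝ H]
    [FiniteDimensional ℝ H]
    (f g : H → EReal)
    (hf_cvx : ConvexFn f)
    (hg_cvx : ConvexFn g)
    (vP : H) (hvP : IsMinNormPoint (closure (fdom f - fdom g)) vP)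
    (vD : H) (hvD : IsMinNormPoint (closure (fdom (fconj f) + fdom (fconj g))) vD)
    : IsProjOn (recCone (closure (fdom f))) (-(vP + vD)) (-vD) := by
  have hvP_rec : ∀ z ∈ recCone (closure (fdom f)), 0 ≤ ⟪vP, z⟫_ℝ := fun _ hz =>
    real_inner_nonneg_of_mem_recCone_closure_fdom hf_cvx hg_cvx hvP hz
  have hvD_mem : -vD ∈ recCone (closure (fdom f)) := neg_mem_recCone_closure_fdom hf_cvx hvD
  have hvP_mem := mem_recCone_closure_fdom_fconj_add hf_cvx hg_cvx hvP ⟨vD, hvD.1⟩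
  have hvD_vP : 0 ≤ ⟪vD, vP⟫_ℝ :=
    hvD.real_inner_nonneg_of_mem_recCone (convex_closure_fdom_fconj_add f g) hvP_mem
  have horth : ⟪vP, vD⟫_ℝ = 0 :=
    le_antisymm (by simpa using hvP_rec _ hvD_mem) (real_inner_comm vP vD ▸ hvD_vP)
  refine isProjOn_of_real_inner_le_zero hvD_mem fun w hw => ?_
  rw [show -(vP + vD) - -vD = -vP by abel, sub_neg_eq_add, inner_neg_left, inner_add_right]
  linarith [hvP_rec w hw]

theorem neg_vD_eq_proj_recCone {H : Type*} [NormedAddCommGroup H] [InnerProductSpace ℝ H]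
    [FiniteDimensional ℝ H]
    (f g : H → EReal)
    (hf_prop : ProperFn f) (hf_lsc : LowerSemicontinuous f) (hf_cvx : ConvexFn f)
    (hg_prop : ProperFn g) (hg_lsc : LowerSemicontinuous g) (hg_cvx : ConvexFn g)
    (vP : H) (hvP : IsMinNormPoint (closure (fdom f - fdom g)) vP)
    (vD : H) (hvD : IsMinNormPoint (closure (fdom (fconj f) + fdom (fconj g))) vD)
    : IsProjOn (recCone (closure (fdom f))) (-(vP + vD)) (-vD) :=
  neg_vD_eq_proj_recCone_general f g hf_cvx hg_cvx vP hvP vD hvD
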